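/- Let X be a non-singular simplicial set and Φ an n-simplex of the simplicial mapping set X^{Δ[1]} with Φε_k = Φε_l for some 0 ≤ k < l ≤ n. Then Φε_j = Φε_k for all k ≤ j ≤ l. -/

import Mathlib

open CategoryTheory Simplicial Opposite MonoidalCategory Limits

/-- The representing map of a simplex is degreewise injective. -/
def SSet.RepInj (X : SSet.{0}) {n : ℕ} (x : X _⦋n⦌) : Prop :=
  ∀ m : SimplexCategoryᵒᵖ, Function.Injective (((SSet.yonedaEquiv (X := X) (n := ⦋n⦌)).symm x).app m)

/-- The `i`-th vertex `x εᵢ` of a simplex. -/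
def SSet.vert (X : SSet.{0}) {n : ℕ} (x : X _⦋n⦌) (i : Fin (n + 1)) : X _⦋0⦌ :=
  X.map (SimplexCategory.const ⦋0⦌ ⦋n⦌ i).op x

/-- A simplex is degenerate if it is obtained from a simplex of strictly
lower degree by the action of an operator. -/
def SSet.IsDegenerate (X : SSet.{0}) {n : ℕ} (x : X _⦋n⦌) : Prop :=
  ∃ (m : ℕ) (_ : m < n) (α : (⦋n⦌ : SimplexCategory) ⟶ ⦋m⦌) (y : X _⦋m⦌),
    X.map α.op y = x

/-- A simplicial set is non-singular if every non-degenerate simplex has a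
degreewise injective representing map. -/
def SSet.NonSingular (X : SSet.{0}) : Prop :=
  ∀ (n : ℕ) (x : X _⦋n⦌), ¬ X.IsDegenerate x → X.RepInj x


/-- The simplicial mapping set `X^K`, whose `n`-simplices are the simplicial
maps `Δ[n] × K → X`. -/
noncomputable def SSet.sHom (K X : SSet.{0}) : SSet.{0} where
  obj m := SSet.stdSimplex.obj m.unop ⊗ K ⟶ X
  map α := TypeCat.ofHom fun f => (SSet.stdSimplex.map α.unop ▷ K) ≫ f
  map_id m := by
    ext f : 3
    erw [CategoryTheory.Functor.map_id]; simp
  map_comp α β := by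
    ext f : 3
    erw [CategoryTheory.Functor.map_comp]; simp [MonoidalCategory.comp_whiskerRight]

/-!
Write `e i` for the edge `Φ ({i} × Δ[1])` of `X`; the vertex `Φ εᵢ` of `X^{Δ[1]}` is determined
by it. In a non-singular `X` a simplex with two equal vertices is degenerate, and a degenerate
2-simplex has two adjacent equal vertices, whose opposite faces then agree.
Applied to the triangles `Φ ((k, t), (j, t), (l, t))` this shows that `e j` and `e k` have the same
endpoints. If these endpoints coincide, both edges are degenerate, hence equal. Otherwise the
triangles `Φ ((k, 0), (j, 0), (j, 1))` and `Φ ((k, 0), (k, 1), (j, 1))` each have exactly one pair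
of equal adjacent vertices, and the resulting face identities say that `e j` and `e k` both equal
the diagonal edge `Φ ((k, 0), (j, 1))`.
-/

namespace SSet
open SimplexCategory

variable {X : SSet.{0}} {n p : ℕ}

lemma vert_map {m : ℕ} (α : ⦋n⦌ ⟶ ⦋m⦌) (y : X _⦋m⦌) (i : Fin (n + 1)) :
    X.vert (X.map α.op y) i = X.vert y (α.toOrderHom i) := by
  rw [vert, vert, ← Functor.map_comp_apply, ← op_comp, SimplexCategory.const_comp]

lemma vert_of_dim_zero (y : X _⦋0⦌) (i : Fin 1) : X.vert y i = y := by
  rw [vert, Subsingleton.elim (SimplexCategory.const ⦋0⦌ ⦋0⦌ i) (𝟙 _), op_id, Functor.map_id_apply]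

lemma NonSingular.isDegenerate_of_vert_eq (hX : X.NonSingular) {x : X _⦋n⦌}
    {i j : Fin (n + 1)} (hij : i ≠ j) (h : X.vert x i = X.vert x j) : X.IsDegenerate x := by
  by_contra hx
  exact hij (congrArg (fun v ↦ (stdSimplex.objEquiv v).toOrderHom 0) (hX n x hx (op ⦋0⦌) h))

lemma NonSingular.eq_σ_vert_of_vert_eq (hX : X.NonSingular) {e : X _⦋1⦌}
    (h : X.vert e 0 = X.vert e 1) : e = X.map (σ 0).op (X.vert e 0) := by
  obtain ⟨m, hm, α, y, rfl⟩ := hX.isDegenerate_of_vert_eq (by decide) h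
  obtain rfl : m = 0 := by omega
  rw [vert_map, vert_of_dim_zero, eq_const_to_zero α, eq_const_to_zero (σ 0)]

lemma IsDegenerate.exists_of_dim_two {z : X _⦋2⦌} (hz : X.IsDegenerate z) :
    ∃ (m : ℕ) (α : ⦋2⦌ ⟶ ⦋m⦌) (y : X _⦋m⦌), X.map α.op y = z ∧
      (α.toOrderHom 0 = α.toOrderHom 1 ∨ α.toOrderHom 1 = α.toOrderHom 2) := by
  obtain ⟨m, hm, α, y, rfl⟩ := hz
  refine ⟨m, α, y, rfl, ?_⟩
  have h01 : α.toOrderHom 0 ≤ α.toOrderHom 1 := α.toOrderHom.monotone (by decide)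
  have h12 : α.toOrderHom 1 ≤ α.toOrderHom 2 := α.toOrderHom.monotone (by decide)
  have h2 : (α.toOrderHom 2 : ℕ) < m + 1 := (α.toOrderHom 2).isLt
  rw [Fin.le_iff_val_le_val] at h01 h12
  rw [Fin.ext_iff, Fin.ext_iff]
  omega

lemma IsDegenerate.vert_eq_or_vert_eq {z : X _⦋2⦌} (hz : X.IsDegenerate z) :
    X.vert z 0 = X.vert z 1 ∨ X.vert z 1 = X.vert z 2 := by
  obtain ⟨m, α, y, rfl, h | h⟩ := hz.exists_of_dim_two
  · exact Or.inl (by simp only [vert_map, h])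
  · exact Or.inr (by simp only [vert_map, h])

lemma IsDegenerate.map_δ_zero_eq_map_δ_one {z : X _⦋2⦌} (hz : X.IsDegenerate z)
    (h : X.vert z 1 ≠ X.vert z 2) : X.map (δ 0).op z = X.map (δ 1).op z := by
  obtain ⟨m, α, y, rfl, hα | hα⟩ := hz.exists_of_dim_two
  · simp only [← Functor.map_comp_apply, ← op_comp]
    rw [Hom.ext_one_left (δ 0 ≫ α) (δ 1 ≫ α) hα.symm]
  · exact absurd (by simp only [vert_map, hα]) h

lemma IsDegenerate.map_δ_one_eq_map_δ_two {z : X _⦋2⦌} (hz : X.IsDegenerate z)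
    (h : X.vert z 0 ≠ X.vert z 1) : X.map (δ 1).op z = X.map (δ 2).op z := by
  obtain ⟨m, α, y, rfl, hα | hα⟩ := hz.exists_of_dim_two
  · exact absurd (by simp only [vert_map, hα]) h
  · simp only [← Functor.map_comp_apply, ← op_comp]
    rw [Hom.ext_one_left (δ 1 ≫ α) (δ 2 ≫ α) rfl hα.symm]

lemma NonSingular.vert_one_eq_vert_zero (hX : X.NonSingular) {z : X _⦋2⦌}
    (h : X.vert z 0 = X.vert z 2) : X.vert z 1 = X.vert z 0 := by
  rcases (hX.isDegenerate_of_vert_eq (by decide) h).vert_eq_or_vert_eq with h01 | h12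
  · exact h01.symm
  · rw [h12, h]

def evalProd (Φ : Δ[n] ⊗ Δ[p] ⟶ X) {m : ℕ} (a : ⦋m⦌ ⟶ ⦋n⦌) (b : ⦋m⦌ ⟶ ⦋p⦌) : X _⦋m⦌ :=
  Φ.app (op ⦋m⦌) (stdSimplex.objEquiv.symm a, stdSimplex.objEquiv.symm b)

lemma map_evalProd (Φ : Δ[n] ⊗ Δ[p] ⟶ X) {m q : ℕ} (a : ⦋m⦌ ⟶ ⦋n⦌) (b : ⦋m⦌ ⟶ ⦋p⦌)
    (γ : ⦋q⦌ ⟶ ⦋m⦌) : X.map γ.op (evalProd Φ a b) = evalProd Φ (γ ≫ a) (γ ≫ b) :=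
  (NatTrans.naturality_apply Φ γ.op _).symm

lemma vert_evalProd (Φ : Δ[n] ⊗ Δ[p] ⟶ X) {m : ℕ} (a : ⦋m⦌ ⟶ ⦋n⦌) (b : ⦋m⦌ ⟶ ⦋p⦌)
    (i : Fin (m + 1)) :
    X.vert (evalProd Φ a b) i =
      evalProd Φ (SimplexCategory.const ⦋0⦌ ⦋n⦌ (a.toOrderHom i))
        (SimplexCategory.const ⦋0⦌ ⦋p⦌ (b.toOrderHom i)) := by
  rw [vert, map_evalProd, SimplexCategory.const_comp, SimplexCategory.const_comp]

lemma hom_ext_evalProd {Φ Ψ : Δ[n] ⊗ Δ[p] ⟶ X}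
    (h : ∀ (m : ℕ) (a : ⦋m⦌ ⟶ ⦋n⦌) (b : ⦋m⦌ ⟶ ⦋p⦌), evalProd Φ a b = evalProd Ψ a b) :
    Φ = Ψ := by
  ext ⟨⟨m⟩⟩ ⟨x, y⟩
  exact h m (stdSimplex.objEquiv x) (stdSimplex.objEquiv y)

def sliceAt (Φ : Δ[n] ⊗ Δ[p] ⟶ X) (i : Fin (n + 1)) : X _⦋p⦌ :=
  evalProd Φ (SimplexCategory.const ⦋p⦌ ⦋n⦌ i) (𝟙 _)

lemma evalProd_eq_map_sliceAt (Φ : Δ[0] ⊗ Δ[p] ⟶ X) {m : ℕ} (a : ⦋m⦌ ⟶ ⦋0⦌)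
    (b : ⦋m⦌ ⟶ ⦋p⦌) : evalProd Φ a b = X.map b.op (sliceAt Φ 0) := by
  rw [sliceAt, map_evalProd, Category.comp_id, eq_const_to_zero a, eq_const_to_zero (b ≫ _)]

lemma eq_iff_sliceAt_zero_eq {Φ Ψ : Δ[0] ⊗ Δ[p] ⟶ X} : Φ = Ψ ↔ sliceAt Φ 0 = sliceAt Ψ 0 :=
  ⟨fun h ↦ h ▸ rfl, fun h ↦ hom_ext_evalProd fun _ a b ↦ by
    rw [evalProd_eq_map_sliceAt, evalProd_eq_map_sliceAt, h]⟩

lemma sliceAt_sHom_vert (Φ : (sHom Δ[p] X) _⦋n⦌) (i : Fin (n + 1)) :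
    sliceAt ((sHom Δ[p] X).vert Φ i) 0 = sliceAt Φ i :=
  rfl

lemma sHom_vert_eq_iff (Φ : (sHom Δ[p] X) _⦋n⦌) (i i' : Fin (n + 1)) :
    (sHom Δ[p] X).vert Φ i = (sHom Δ[p] X).vert Φ i' ↔ sliceAt Φ i = sliceAt Φ i' := by
  rw [← sliceAt_sHom_vert, ← sliceAt_sHom_vert]
  exact eq_iff_sliceAt_zero_eq

lemma vert_sliceAt (Φ : Δ[n] ⊗ Δ[p] ⟶ X) (i : Fin (n + 1)) (t : Fin (p + 1)) :
    X.vert (sliceAt Φ i) t =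
      evalProd Φ (SimplexCategory.const ⦋0⦌ ⦋n⦌ i) (SimplexCategory.const ⦋0⦌ ⦋p⦌ t) :=
  vert_evalProd _ _ _ _

lemma NonSingular.evalProd_const_eq_of_between (hX : X.NonSingular) (Φ : Δ[n] ⊗ Δ[p] ⟶ X)
    (t : Fin (p + 1)) {k j l : Fin (n + 1)} (hkj : k ≤ j) (hjl : j ≤ l)
    (h : evalProd Φ (SimplexCategory.const ⦋0⦌ ⦋n⦌ k) (SimplexCategory.const ⦋0⦌ ⦋p⦌ t) =
      evalProd Φ (SimplexCategory.const ⦋0⦌ ⦋n⦌ l) (SimplexCategory.const ⦋0⦌ ⦋p⦌ t)) :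
    evalProd Φ (SimplexCategory.const ⦋0⦌ ⦋n⦌ j) (SimplexCategory.const ⦋0⦌ ⦋p⦌ t) =
      evalProd Φ (SimplexCategory.const ⦋0⦌ ⦋n⦌ k) (SimplexCategory.const ⦋0⦌ ⦋p⦌ t) := by
  have := hX.vert_one_eq_vert_zero
    (z := evalProd Φ (mkOfLeComp k j l hkj hjl) (SimplexCategory.const ⦋2⦌ ⦋p⦌ t))
    (by rw [vert_evalProd, vert_evalProd]; exact h)
  rwa [vert_evalProd, vert_evalProd] at this

lemma NonSingular.sliceAt_eq_of_vert_eq (hX : X.NonSingular) (Φ : Δ[n] ⊗ Δ[1] ⟶ X)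
    {k j : Fin (n + 1)} (hkj : k ≤ j)
    (h : ∀ t, X.vert (sliceAt Φ j) t = X.vert (sliceAt Φ k) t) :
    sliceAt Φ j = sliceAt Φ k := by
  by_cases hk : X.vert (sliceAt Φ k) 0 = X.vert (sliceAt Φ k) 1
  · have hj : X.vert (sliceAt Φ j) 0 = X.vert (sliceAt Φ j) 1 := by rw [h, h, hk]
    rw [hX.eq_σ_vert_of_vert_eq hj, hX.eq_σ_vert_of_vert_eq hk, h]
  simp only [vert_sliceAt] at h hk
  set A := evalProd Φ (mkOfLeComp k j j hkj le_rfl) (σ 0)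
  set F := evalProd Φ (mkOfLeComp k k j le_rfl hkj) (σ 1)
  have hA : X.vert A 0 = X.vert A 1 := by
    rw [vert_evalProd, vert_evalProd]; exact (h 0).symm
  have hF : X.vert F 1 = X.vert F 2 := by
    rw [vert_evalProd, vert_evalProd]; exact (h 1).symm
  have hAF : X.vert A 1 ≠ X.vert A 2 := by
    rw [vert_evalProd, vert_evalProd]; exact fun e ↦ hk ((h 0).symm.trans (e.trans (h 1)))
  have hFA : X.vert F 0 ≠ X.vert F 1 := by
    rw [vert_evalProd, vert_evalProd]; exact hk
  have hA' := (hX.isDegenerate_of_vert_eq (by decide) hA).map_δ_zero_eq_map_δ_one hAF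
  have hF' := (hX.isDegenerate_of_vert_eq (by decide) hF).map_δ_one_eq_map_δ_two hFA
  simp only [A, F, map_evalProd] at hA' hF'
  calc sliceAt Φ j = evalProd Φ (mkOfLe k j hkj) (𝟙 _) := by
        rw [sliceAt]; convert hA' using 2 <;> exact Hom.ext_one_left _ _
    _ = sliceAt Φ k := by
        rw [sliceAt]; convert hF' using 2 <;> exact Hom.ext_one_left _ _

lemma NonSingular.sliceAt_eq_of_between (hX : X.NonSingular) (Φ : Δ[n] ⊗ Δ[1] ⟶ X)
    {k j l : Fin (n + 1)} (hkj : k ≤ j) (hjl : j ≤ l) (h : sliceAt Φ k = sliceAt Φ l) :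
    sliceAt Φ j = sliceAt Φ k :=
  hX.sliceAt_eq_of_vert_eq Φ hkj fun t ↦ by
    have hkl := congrArg (X.vert · t) h
    simp only [vert_sliceAt] at hkl ⊢
    exact hX.evalProd_const_eq_of_between Φ t hkj hjl hkl

end SSet

theorem vert_eq_of_between_general (X : SSet.{0}) (hX : X.NonSingular) {n : ℕ}
    (Φ : (SSet.sHom Δ[1] X) _⦋n⦌) (k l : Fin (n + 1))
    (h : (SSet.sHom Δ[1] X).vert Φ k = (SSet.sHom Δ[1] X).vert Φ l) :
    ∀ j : Fin (n + 1), k ≤ j → j ≤ l →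
      (SSet.sHom Δ[1] X).vert Φ j = (SSet.sHom Δ[1] X).vert Φ k := by
  intro j hkj hjl
  rw [SSet.sHom_vert_eq_iff] at h ⊢
  exact hX.sliceAt_eq_of_between Φ hkj hjl h

/-- Let `X` be a non-singular simplicial set and `Φ` an
`n`-simplex of the simplicial mapping set `X^{Δ[1]}` with `Φ ε_k = Φ ε_l` for
some `0 ≤ k < l ≤ n`.  Then `Φ ε_j = Φ ε_k` for all `k ≤ j ≤ l`. -/
theorem vert_eq_of_between (X : SSet.{0}) (hX : X.NonSingular) {n : ℕ}
    (Φ : (SSet.sHom Δ[1] X) _⦋n⦌) (k l : Fin (n + 1)) (hkl : k < l)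
    (h : (SSet.sHom Δ[1] X).vert Φ k = (SSet.sHom Δ[1] X).vert Φ l) :
    ∀ j : Fin (n + 1), k ≤ j → j ≤ l →
      (SSet.sHom Δ[1] X).vert Φ j = (SSet.sHom Δ[1] X).vert Φ k :=
  vert_eq_of_between_general X hX Φ k l h
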